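/- arXiv:1708.03537 — 8 statements merged into one kernel-verified Lean document; each statement's English description precedes it below -/
import Mathlib

section
/- Let γ > 1 and let two ideal-MHD states (ρ_L,u_L,v_L,w_L,p_L,B_{1,L},B_{2,L},B_{3,L}) and (ρ_R,u_R,v_R,w_R,p_R,B_{1,R},B_{2,R},B_{3,R}) satisfy ρ_L,ρ_R,p_L,p_R > 0, ρ_L ≠ ρ_R, and β_L ≠ β_R where β = ρ/(2p). Define the KEPEC numerical flux f̂ ∈ ℝ⁸ by: f̂₁ = ρ^ln⟨u⟩; f̂₂ = ρ^ln⟨u⟩² + ⟨ρ⟩/(2⟨β⟩) + ½(⟨B₁²⟩ + ⟨B₂²⟩ + ⟨B₃²⟩) − ⟨B₁²⟩; f̂₃ = ρ^ln⟨u⟩⟨v⟩ − ⟨B₁B₂⟩; f̂₄ = ρ^ln⟨u⟩⟨w⟩ − ⟨B₁B₃⟩; f̂₅ = (⟨u⟩/2)(ρ^ln/(β^ln(γ−1)) + ⟨ρ⟩/⟨β⟩) + (ρ^ln⟨u⟩/2)(2(⟨u⟩² + ⟨v⟩² + ⟨w⟩²) − (⟨u²⟩ + ⟨v²⟩ + ⟨w²⟩))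 + (⟨u⟩/2)(⟨B₁²⟩ + ⟨B₂²⟩ + ⟨B₃²⟩ + 2(⟨B₂⟩² + ⟨B₃⟩²)) − ⟨u⟩⟨B₁²⟩ − ⟨v⟩⟨B₁B₂⟩ − ⟨w⟩⟨B₁B₃⟩ − ⟨v⟩⟨B₁⟩⟨B₂⟩ − ⟨w⟩⟨B₁⟩⟨B₃⟩ + ⟨uB₁²⟩ + ⟨vB₁B₂⟩ + ⟨wB₁B₃⟩ − ½(⟨uB₁²⟩ + ⟨uB₂²⟩ + ⟨uB₃²⟩); f̂₆ = 0; f̂₇ = ⟨u⟩⟨B₂⟩ − ⟨v⟩⟨B₁⟩; f̂₈ = ⟨u⟩⟨B₃⟩ − ⟨w⟩⟨B₁⟩. Then f̂ satisfies the discrete entropy conservation condition with the discretized Janhunen source term: ⟦v⟧ · f̂ = ⟦ρu⟧ + ⟦βu(B₁² + B₂² + B₃²)⟧ − 2⟦βB₁(uB₁ + vB₂ + wB₃)⟧ + 2⟨β⟩⟦B₁⟧(⟨u⟩⟨B₁⟩ + ⟨v⟩⟨B₂⟩ + ⟨w⟩⟨B₃⟩). -/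
/-!
The KEPEC flux is the Euler KEPEC flux plus a magnetic part. Against the magnetic part the jump
of the entropy variables is a polynomial identity, and it produces exactly the Janhunen source
terms. For the Euler part, `ln p = ln ρ - ln 2 - ln β` makes the first entropy variable
`ln ρ + ln β / (γ - 1)` up to a constant and `-β‖u‖²`; the logarithmic means turn the jumps of
`ln ρ` and `ln β` back into `⟦ρ⟧ / ρ^ln` and `⟦β⟧ / β^ln`, and by the product rule
`⟦ab⟧ = ⟨a⟩⟦b⟧ + ⟨b⟩⟦a⟧` what is left is `⟨u⟩⟦ρ⟧ + ⟨ρ⟩⟦u⟧ = ⟦ρu⟧`.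
-/

open Matrix

noncomputable section

/-- Arithmetic mean of a pair of states. -/
def am (x y : ℝ) : ℝ := (x + y) / 2

/-- Logarithmic mean of a pair of (positive, distinct) states. -/
noncomputable def lnM (x y : ℝ) : ℝ := (x - y) / (Real.log x - Real.log y)

-- Both identities also hold for `x = y`, where `lnM x x = 0 / 0 = 0`.
theorem lnM_mul_log_sub_log {x y : ℝ} (hx : 0 < x) (hy : 0 < y) :
    lnM x y * (Real.log y - Real.log x) = y - x := by
  rcases eq_or_ne x y with rfl | hxy
  · simp
  have hlog : Real.log x - Real.log y ≠ 0 :=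
    sub_ne_zero.mpr fun h => hxy (Real.log_injOn_pos hx hy h)
  unfold lnM
  field_simp
  ring

theorem sub_div_lnM {x y : ℝ} (hx : 0 < x) (hy : 0 < y) :
    (y - x) / lnM x y = Real.log y - Real.log x := by
  rcases eq_or_ne (lnM x y) 0 with h | h
  · obtain rfl : y = x := by
      simpa [h, sub_eq_zero, eq_comm] using lnM_mul_log_sub_log hx hy
    simp
  · rw [div_eq_iff h, ← lnM_mul_log_sub_log hx hy, mul_comm]

structure MHDState where
  ρ : ℝ
  u : ℝ
  v : ℝ
  w : ℝ
  p : ℝ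
  B₁ : ℝ
  B₂ : ℝ
  B₃ : ℝ

namespace MHDState

variable (γ : ℝ) (q qL qR : MHDState)

def β : ℝ := q.ρ / (2 * q.p)

def entropy : ℝ := Real.log q.p - γ * Real.log q.ρ

def entropyVars : Fin 8 → ℝ :=
  ![(γ - q.entropy γ) / (γ - 1) - q.β * (q.u ^ 2 + q.v ^ 2 + q.w ^ 2), 2 * q.β * q.u,
    2 * q.β * q.v, 2 * q.β * q.w, -(2 * q.β), 2 * q.β * q.B₁, 2 * q.β * q.B₂, 2 * q.β * q.B₃]

theorem β_pos {q : MHDState} (hρ : 0 < q.ρ) (hp : 0 < q.p) : 0 < q.β := by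
  unfold β; positivity

theorem entropyVars_zero {γ : ℝ} {q : MHDState} (hγ : γ ≠ 1) (hρ : 0 < q.ρ) (hp : 0 < q.p) :
    q.entropyVars γ 0 = Real.log q.ρ + (γ + Real.log 2 + Real.log q.β) / (γ - 1)
      - q.β * (q.u ^ 2 + q.v ^ 2 + q.w ^ 2) := by
  have hγ' : γ - 1 ≠ 0 := sub_ne_zero.mpr hγ
  have hlog_β : Real.log q.β = Real.log q.ρ - Real.log 2 - Real.log q.p := by
    rw [β, Real.log_div hρ.ne' (by positivity), Real.log_mul two_ne_zero hp.ne']; ring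
  simp only [entropyVars, entropy, cons_val_zero, hlog_β]
  field_simp
  ring

def eulerFlux : Fin 8 → ℝ :=
  let ρln := lnM qL.ρ qR.ρ
  let au := am qL.u qR.u
  let av := am qL.v qR.v
  let aw := am qL.w qR.w
  let aρ := am qL.ρ qR.ρ
  let aβ := am qL.β qR.β
  ![ρln * au,
    ρln * au ^ 2 + aρ / (2 * aβ),
    ρln * au * av,
    ρln * au * aw,
    au / 2 * (ρln / (lnM qL.β qR.β * (γ - 1)) + aρ / aβ)
      + ρln * au / 2 * (2 * (au ^ 2 + av ^ 2 + aw ^ 2)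
        - (am (qL.u ^ 2) (qR.u ^ 2) + am (qL.v ^ 2) (qR.v ^ 2) + am (qL.w ^ 2) (qR.w ^ 2))),
    0, 0, 0]

def magneticFlux : Fin 8 → ℝ :=
  let au := am qL.u qR.u
  let av := am qL.v qR.v
  let aw := am qL.w qR.w
  let aB1 := am qL.B₁ qR.B₁
  let aB2 := am qL.B₂ qR.B₂
  let aB3 := am qL.B₃ qR.B₃
  let aB1sq := am (qL.B₁ ^ 2) (qR.B₁ ^ 2)
  let aB1B2 := am (qL.B₁ * qL.B₂) (qR.B₁ * qR.B₂)
  let aB1B3 := am (qL.B₁ * qL.B₃) (qR.B₁ * qR.B₃)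
  let aBsq := aB1sq + am (qL.B₂ ^ 2) (qR.B₂ ^ 2) + am (qL.B₃ ^ 2) (qR.B₃ ^ 2)
  let auB1sq := am (qL.u * qL.B₁ ^ 2) (qR.u * qR.B₁ ^ 2)
  ![0,
    aBsq / 2 - aB1sq,
    -aB1B2,
    -aB1B3,
    au / 2 * (aBsq + 2 * (aB2 ^ 2 + aB3 ^ 2))
      - au * aB1sq - av * aB1B2 - aw * aB1B3 - av * aB1 * aB2 - aw * aB1 * aB3
      + auB1sq + am (qL.v * qL.B₁ * qL.B₂) (qR.v * qR.B₁ * qR.B₂)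
      + am (qL.w * qL.B₁ * qL.B₃) (qR.w * qR.B₁ * qR.B₃)
      - (auB1sq + am (qL.u * qL.B₂ ^ 2) (qR.u * qR.B₂ ^ 2)
          + am (qL.u * qL.B₃ ^ 2) (qR.u * qR.B₃ ^ 2)) / 2,
    0,
    au * aB2 - av * aB1,
    au * aB3 - aw * aB1]

theorem entropyVars_sub_dotProduct_magneticFlux :
    (qR.entropyVars γ - qL.entropyVars γ) ⬝ᵥ magneticFlux qL qR =
      (qR.β * qR.u * (qR.B₁ ^ 2 + qR.B₂ ^ 2 + qR.B₃ ^ 2)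
          - qL.β * qL.u * (qL.B₁ ^ 2 + qL.B₂ ^ 2 + qL.B₃ ^ 2))
        - 2 * (qR.β * qR.B₁ * (qR.u * qR.B₁ + qR.v * qR.B₂ + qR.w * qR.B₃)
          - qL.β * qL.B₁ * (qL.u * qL.B₁ + qL.v * qL.B₂ + qL.w * qL.B₃))
        + 2 * am qL.β qR.β * (qR.B₁ - qL.B₁)
          * (am qL.u qR.u * am qL.B₁ qR.B₁ + am qL.v qR.v * am qL.B₂ qR.B₂
            + am qL.w qR.w * am qL.B₃ qR.B₃) := by
  simp only [dotProduct, Fin.sum_univ_eight, entropyVars, magneticFlux, Pi.sub_apply, am,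
    cons_val]
  ring

theorem entropyVars_sub_dotProduct_eulerFlux (hγ : γ ≠ 1) (hρL : 0 < qL.ρ) (hpL : 0 < qL.p)
    (hρR : 0 < qR.ρ) (hpR : 0 < qR.p) :
    (qR.entropyVars γ - qL.entropyVars γ) ⬝ᵥ eulerFlux γ qL qR = qR.ρ * qR.u - qL.ρ * qL.u := by
  have hβL := β_pos hρL hpL
  have hβR := β_pos hρR hpR
  have hρ := lnM_mul_log_sub_log hρL hρR
  have hβ := sub_div_lnM hβL hβR
  have haβ : am qL.β qR.β ≠ 0 := by unfold am; positivity
  simp only [dotProduct, Fin.sum_univ_eight, Pi.sub_apply, entropyVars_zero hγ hρL hpL,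
    entropyVars_zero hγ hρR hpR]
  simp only [entropyVars, eulerFlux, cons_val, div_mul_eq_div_div]
  -- `hβ` cancels the internal-energy term against `⟦ln β⟧ / (γ - 1)`; dividing by `⟨β⟩` leaves
  -- the pressure terms as `⟨ρ⟩⟦u⟧`; the kinetic terms cancel identically.
  linear_combination (norm := skip) am qL.u qR.u * hρ
    - lnM qL.ρ qR.ρ * am qL.u qR.u / (γ - 1) * hβ
    + am qL.ρ qR.ρ * (qR.u - qL.u) * mul_inv_cancel₀ haβ
  simp only [am]
  ring

def kepecFlux : Fin 8 → ℝ :=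
  let ρln := lnM qL.ρ qR.ρ
  let au := am qL.u qR.u
  let av := am qL.v qR.v
  let aw := am qL.w qR.w
  let aρ := am qL.ρ qR.ρ
  let aβ := am qL.β qR.β
  let aB1 := am qL.B₁ qR.B₁
  let aB2 := am qL.B₂ qR.B₂
  let aB3 := am qL.B₃ qR.B₃
  let aB1sq := am (qL.B₁ ^ 2) (qR.B₁ ^ 2)
  let aB2sq := am (qL.B₂ ^ 2) (qR.B₂ ^ 2)
  let aB3sq := am (qL.B₃ ^ 2) (qR.B₃ ^ 2)
  let aB1B2 := am (qL.B₁ * qL.B₂) (qR.B₁ * qR.B₂)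
  let aB1B3 := am (qL.B₁ * qL.B₃) (qR.B₁ * qR.B₃)
  let auB1sq := am (qL.u * qL.B₁ ^ 2) (qR.u * qR.B₁ ^ 2)
  let auB2sq := am (qL.u * qL.B₂ ^ 2) (qR.u * qR.B₂ ^ 2)
  let auB3sq := am (qL.u * qL.B₃ ^ 2) (qR.u * qR.B₃ ^ 2)
  ![ρln * au,
    ρln * au ^ 2 + aρ / (2 * aβ) + (aB1sq + aB2sq + aB3sq) / 2 - aB1sq,
    ρln * au * av - aB1B2,
    ρln * au * aw - aB1B3,
    au / 2 * (ρln / (lnM qL.β qR.β * (γ - 1)) + aρ / aβ)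
      + ρln * au / 2 * (2 * (au ^ 2 + av ^ 2 + aw ^ 2)
        - (am (qL.u ^ 2) (qR.u ^ 2) + am (qL.v ^ 2) (qR.v ^ 2) + am (qL.w ^ 2) (qR.w ^ 2)))
      + au / 2 * (aB1sq + aB2sq + aB3sq + 2 * (aB2 ^ 2 + aB3 ^ 2))
      - au * aB1sq - av * aB1B2 - aw * aB1B3 - av * aB1 * aB2 - aw * aB1 * aB3
      + auB1sq + am (qL.v * qL.B₁ * qL.B₂) (qR.v * qR.B₁ * qR.B₂)
      + am (qL.w * qL.B₁ * qL.B₃) (qR.w * qR.B₁ * qR.B₃) - (auB1sq + auB2sq + auB3sq) / 2,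
    0,
    au * aB2 - av * aB1,
    au * aB3 - aw * aB1]

theorem kepecFlux_eq_eulerFlux_add_magneticFlux :
    kepecFlux γ qL qR = eulerFlux γ qL qR + magneticFlux qL qR := by
  ext i
  fin_cases i <;>
    simp only [kepecFlux, eulerFlux, magneticFlux, Pi.add_apply, Fin.zero_eta, Fin.mk_one,
      Fin.reduceFinMk, cons_val_zero, cons_val_one, cons_val, Fin.isValue] <;>
    ring

theorem entropyVars_sub_dotProduct_kepecFlux (hγ : γ ≠ 1) (hρL : 0 < qL.ρ) (hpL : 0 < qL.p)
    (hρR : 0 < qR.ρ) (hpR : 0 < qR.p) :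
    (qR.entropyVars γ - qL.entropyVars γ) ⬝ᵥ kepecFlux γ qL qR =
      (qR.ρ * qR.u - qL.ρ * qL.u)
        + (qR.β * qR.u * (qR.B₁ ^ 2 + qR.B₂ ^ 2 + qR.B₃ ^ 2)
            - qL.β * qL.u * (qL.B₁ ^ 2 + qL.B₂ ^ 2 + qL.B₃ ^ 2))
        - 2 * (qR.β * qR.B₁ * (qR.u * qR.B₁ + qR.v * qR.B₂ + qR.w * qR.B₃)
            - qL.β * qL.B₁ * (qL.u * qL.B₁ + qL.v * qL.B₂ + qL.w * qL.B₃))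
        + 2 * am qL.β qR.β * (qR.B₁ - qL.B₁)
          * (am qL.u qR.u * am qL.B₁ qR.B₁ + am qL.v qR.v * am qL.B₂ qR.B₂
            + am qL.w qR.w * am qL.B₃ qR.B₃) := by
  rw [kepecFlux_eq_eulerFlux_add_magneticFlux, dotProduct_add,
    entropyVars_sub_dotProduct_eulerFlux γ qL qR hγ hρL hpL hρR hpR,
    entropyVars_sub_dotProduct_magneticFlux]
  ring

end MHDState

theorem kepec_flux_discrete_entropy_conservation_general
    (γ ρL uL vL wL pL B1L B2L B3L ρR uR vR wR pR B1R B2R B3R : ℝ)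
    (hγ : 1 < γ) (hρL : 0 < ρL) (hρR : 0 < ρR) (hpL : 0 < pL) (hpR : 0 < pR) :
    let βL := ρL / (2 * pL)
    let βR := ρR / (2 * pR)
    let sL := Real.log pL - γ * Real.log ρL
    let sR := Real.log pR - γ * Real.log ρR
    let vL8 : Fin 8 → ℝ :=
      ![(γ - sL) / (γ - 1) - βL * (uL ^ 2 + vL ^ 2 + wL ^ 2), 2 * βL * uL, 2 * βL * vL,
        2 * βL * wL, -(2 * βL), 2 * βL * B1L, 2 * βL * B2L, 2 * βL * B3L]
    let vR8 : Fin 8 → ℝ :=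
      ![(γ - sR) / (γ - 1) - βR * (uR ^ 2 + vR ^ 2 + wR ^ 2), 2 * βR * uR, 2 * βR * vR,
        2 * βR * wR, -(2 * βR), 2 * βR * B1R, 2 * βR * B2R, 2 * βR * B3R]
    let ρln := lnM ρL ρR
    let βln := lnM βL βR
    let au := am uL uR
    let av := am vL vR
    let aw := am wL wR
    let aρ := am ρL ρR
    let aβ := am βL βR
    let aB1 := am B1L B1R
    let aB2 := am B2L B2R
    let aB3 := am B3L B3R
    let aB1sq := am (B1L ^ 2) (B1R ^ 2)
    let aB2sq := am (B2L ^ 2) (B2R ^ 2)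
    let aB3sq := am (B3L ^ 2) (B3R ^ 2)
    let aB1B2 := am (B1L * B2L) (B1R * B2R)
    let aB1B3 := am (B1L * B3L) (B1R * B3R)
    let au2 := am (uL ^ 2) (uR ^ 2)
    let av2 := am (vL ^ 2) (vR ^ 2)
    let aw2 := am (wL ^ 2) (wR ^ 2)
    let auB1sq := am (uL * B1L ^ 2) (uR * B1R ^ 2)
    let auB2sq := am (uL * B2L ^ 2) (uR * B2R ^ 2)
    let auB3sq := am (uL * B3L ^ 2) (uR * B3R ^ 2)
    let avB1B2 := am (vL * B1L * B2L) (vR * B1R * B2R)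
    let awB1B3 := am (wL * B1L * B3L) (wR * B1R * B3R)
    let f5 :=
      au / 2 * (ρln / (βln * (γ - 1)) + aρ / aβ)
        + ρln * au / 2 * (2 * (au ^ 2 + av ^ 2 + aw ^ 2) - (au2 + av2 + aw2))
        + au / 2 * (aB1sq + aB2sq + aB3sq + 2 * (aB2 ^ 2 + aB3 ^ 2))
        - au * aB1sq - av * aB1B2 - aw * aB1B3 - av * aB1 * aB2 - aw * aB1 * aB3
        + auB1sq + avB1B2 + awB1B3 - (auB1sq + auB2sq + auB3sq) / 2
    let fhat : Fin 8 → ℝ :=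
      ![ρln * au,
        ρln * au ^ 2 + aρ / (2 * aβ) + (aB1sq + aB2sq + aB3sq) / 2 - aB1sq,
        ρln * au * av - aB1B2,
        ρln * au * aw - aB1B3,
        f5,
        0,
        au * aB2 - av * aB1,
        au * aB3 - aw * aB1]
    (fun i => vR8 i - vL8 i) ⬝ᵥ fhat =
      (ρR * uR - ρL * uL)
        + (βR * uR * (B1R ^ 2 + B2R ^ 2 + B3R ^ 2)
            - βL * uL * (B1L ^ 2 + B2L ^ 2 + B3L ^ 2))
        - 2 * (βR * B1R * (uR * B1R + vR * B2R + wR * B3R)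
            - βL * B1L * (uL * B1L + vL * B2L + wL * B3L))
        + 2 * aβ * (B1R - B1L) * (au * aB1 + av * aB2 + aw * aB3) :=
  MHDState.entropyVars_sub_dotProduct_kepecFlux γ ⟨ρL, uL, vL, wL, pL, B1L, B2L, B3L⟩
    ⟨ρR, uR, vR, wR, pR, B1R, B2R, B3R⟩ hγ.ne' hρL hpL hρR hpR

/-- the KEPEC numerical flux satisfies the discrete entropy conservation
condition with the discretized Janhunen source term. -/
theorem kepec_flux_discrete_entropy_conservation
    (γ ρL uL vL wL pL B1L B2L B3L ρR uR vR wR pR B1R B2R B3R : ℝ)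
    (hγ : 1 < γ) (hρL : 0 < ρL) (hρR : 0 < ρR) (hpL : 0 < pL) (hpR : 0 < pR)
    (hρ : ρL ≠ ρR) (hβ : ρL / (2 * pL) ≠ ρR / (2 * pR)) :
    let βL := ρL / (2 * pL)
    let βR := ρR / (2 * pR)
    let sL := Real.log pL - γ * Real.log ρL
    let sR := Real.log pR - γ * Real.log ρR
    let vL8 : Fin 8 → ℝ :=
      ![(γ - sL) / (γ - 1) - βL * (uL ^ 2 + vL ^ 2 + wL ^ 2), 2 * βL * uL, 2 * βL * vL,
        2 * βL * wL, -(2 * βL), 2 * βL * B1L, 2 * βL * B2L, 2 * βL * B3L]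
    let vR8 : Fin 8 → ℝ :=
      ![(γ - sR) / (γ - 1) - βR * (uR ^ 2 + vR ^ 2 + wR ^ 2), 2 * βR * uR, 2 * βR * vR,
        2 * βR * wR, -(2 * βR), 2 * βR * B1R, 2 * βR * B2R, 2 * βR * B3R]
    let ρln := lnM ρL ρR
    let βln := lnM βL βR
    let au := am uL uR
    let av := am vL vR
    let aw := am wL wR
    let aρ := am ρL ρR
    let aβ := am βL βR
    let aB1 := am B1L B1R
    let aB2 := am B2L B2R
    let aB3 := am B3L B3R
    let aB1sq := am (B1L ^ 2) (B1R ^ 2)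
    let aB2sq := am (B2L ^ 2) (B2R ^ 2)
    let aB3sq := am (B3L ^ 2) (B3R ^ 2)
    let aB1B2 := am (B1L * B2L) (B1R * B2R)
    let aB1B3 := am (B1L * B3L) (B1R * B3R)
    let au2 := am (uL ^ 2) (uR ^ 2)
    let av2 := am (vL ^ 2) (vR ^ 2)
    let aw2 := am (wL ^ 2) (wR ^ 2)
    let auB1sq := am (uL * B1L ^ 2) (uR * B1R ^ 2)
    let auB2sq := am (uL * B2L ^ 2) (uR * B2R ^ 2)
    let auB3sq := am (uL * B3L ^ 2) (uR * B3R ^ 2)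
    let avB1B2 := am (vL * B1L * B2L) (vR * B1R * B2R)
    let awB1B3 := am (wL * B1L * B3L) (wR * B1R * B3R)
    let f5 :=
      au / 2 * (ρln / (βln * (γ - 1)) + aρ / aβ)
        + ρln * au / 2 * (2 * (au ^ 2 + av ^ 2 + aw ^ 2) - (au2 + av2 + aw2))
        + au / 2 * (aB1sq + aB2sq + aB3sq + 2 * (aB2 ^ 2 + aB3 ^ 2))
        - au * aB1sq - av * aB1B2 - aw * aB1B3 - av * aB1 * aB2 - aw * aB1 * aB3
        + auB1sq + avB1B2 + awB1B3 - (auB1sq + auB2sq + auB3sq) / 2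
    let fhat : Fin 8 → ℝ :=
      ![ρln * au,
        ρln * au ^ 2 + aρ / (2 * aβ) + (aB1sq + aB2sq + aB3sq) / 2 - aB1sq,
        ρln * au * av - aB1B2,
        ρln * au * aw - aB1B3,
        f5,
        0,
        au * aB2 - av * aB1,
        au * aB3 - aw * aB1]
    (fun i => vR8 i - vL8 i) ⬝ᵥ fhat =
      (ρR * uR - ρL * uL)
        + (βR * uR * (B1R ^ 2 + B2R ^ 2 + B3R ^ 2)
            - βL * uL * (B1L ^ 2 + B2L ^ 2 + B3L ^ 2))
        - 2 * (βR * B1R * (uR * B1R + vR * B2R + wR * B3R)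
            - βL * B1L * (uL * B1L + vL * B2L + wL * B3L))
        + 2 * aβ * (B1R - B1L) * (au * aB1 + av * aB2 + aw * aB3) :=
  kepec_flux_discrete_entropy_conservation_general γ ρL uL vL wL pL B1L B2L B3L ρR uR vR wR pR B1R
    B2R B3R hγ hρL hρR hpL hpR

end
end

section
/- Let γ > 1 and consider an ideal-MHD state with ρ > 0, p > 0 and b_⊥ > 0. With R̂ and Z as defined from this state, and with |Λ| = diag(|u + c_f|, |u + c_a|, |u + c_s|, |u|, |u|, |u − c_s|, |u − c_a|, |u − c_f|) where c_a = |b₁|, the dissipation matrix D := R̂ |Λ| Z R̂ᵀ is symmetric positive semidefinite; consequently, for every vector x ∈ ℝ⁸, −½ xᵀ D x ≤ 0 (the dissipation term of the KEPES flux never produces entropy of the wrong sign). -/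
/-!
Both `|Λ|` and `Z` are diagonal with nonnegative entries (the entries of `Z` are positive
because `ρ, p > 0` and `γ > 1`), so `D = R̂ (|Λ| Z) R̂ᵀ` is a congruence transform of a
nonnegative diagonal matrix and hence positive semidefinite, whatever the eigenvectors `R̂` are.
-/

open Matrix

noncomputable section

def sgnR (x : ℝ) : ℝ := if 0 ≤ x then 1 else -1

theorem Matrix.posSemidef_mul_diagonal_mul_diagonal_mul_transpose
    {m n R : Type*} [Fintype m] [Fintype n] [DecidableEq n]
    [CommRing R] [PartialOrder R] [StarRing R] [StarOrderedRing R] [TrivialStar R]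
    (B : Matrix m n R) {d e : n → R} (hd : ∀ i, 0 ≤ d i) (he : ∀ i, 0 ≤ e i) :
    (B * diagonal d * diagonal e * Bᵀ).PosSemidef := by
  have hde : (diagonal d * diagonal e).PosSemidef := by
    rw [diagonal_mul_diagonal, posSemidef_diagonal_iff]
    exact fun i => mul_nonneg (hd i) (he i)
  simpa only [Matrix.mul_assoc, conjTranspose_eq_transpose_of_trivial] using
    hde.mul_mul_conjTranspose_same B

theorem kepes_entropy_scaling_nonneg {γ ρ p : ℝ} (hγ : 1 < γ) (hρ : 0 < ρ) (hp : 0 < p) :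
    ∀ i, 0 ≤ (![1 / (2 * ρ * γ), p / (2 * ρ ^ 3), 1 / (2 * ρ * γ), ρ * (γ - 1) / γ, p / ρ,
      1 / (2 * ρ * γ), p / (2 * ρ ^ 3), 1 / (2 * ρ * γ)] : Fin 8 → ℝ) i := by
  have hγ1 : 0 < γ - 1 := sub_pos.mpr hγ
  have hγ0 : 0 < γ := by linarith
  intro i
  fin_cases i <;> dsimp <;> positivity

theorem kepes_dissipation_matrix_posSemidef_general
    (γ ρ u v w p B1 a b1 bperp β2 β3 cf cs αf αs : ℝ)
    (hγ : 1 < γ) (hρ : 0 < ρ) (hp : 0 < p) :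
    let usq := u ^ 2 + v ^ 2 + w ^ 2
    let Ψpf := αf * ρ * usq / 2 + a * αs * ρ * bperp + αf * ρ * a ^ 2 / (γ - 1)
        + αf * cf * ρ * u - αs * cs * ρ * sgnR b1 * (v * β2 + w * β3)
    let Ψmf := αf * ρ * usq / 2 + a * αs * ρ * bperp + αf * ρ * a ^ 2 / (γ - 1)
        - αf * cf * ρ * u + αs * cs * ρ * sgnR b1 * (v * β2 + w * β3)
    let Ψps := αs * ρ * usq / 2 - a * αf * ρ * bperp + αs * ρ * a ^ 2 / (γ - 1)
        + αs * cs * ρ * u + αf * cf * ρ * sgnR b1 * (v * β2 + w * β3)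
    let Ψms := αs * ρ * usq / 2 - a * αf * ρ * bperp + αs * ρ * a ^ 2 / (γ - 1)
        - αs * cs * ρ * u - αf * cf * ρ * sgnR b1 * (v * β2 + w * β3)
    let rE : Fin 8 → ℝ := ![1, u, v, w, usq / 2, 0, 0, 0]
    let rD : Fin 8 → ℝ := ![0, 0, 0, 0, B1, 1, 0, 0]
    let rpa : Fin 8 → ℝ :=
      ![0, 0, ρ * Real.sqrt ρ * β3, -(ρ * Real.sqrt ρ * β2),
        -(ρ * Real.sqrt ρ * (β2 * w - β3 * v)), 0, -(ρ * β3), ρ * β2]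
    let rma : Fin 8 → ℝ :=
      ![0, 0, -(ρ * Real.sqrt ρ * β3), ρ * Real.sqrt ρ * β2,
        ρ * Real.sqrt ρ * (β2 * w - β3 * v), 0, -(ρ * β3), ρ * β2]
    let rpf : Fin 8 → ℝ :=
      ![αf * ρ, αf * ρ * (u + cf), ρ * (αf * v - αs * cs * β2 * sgnR b1),
        ρ * (αf * w - αs * cs * β3 * sgnR b1), Ψpf, 0,
        αs * a * β2 * Real.sqrt ρ, αs * a * β3 * Real.sqrt ρ]
    let rmf : Fin 8 → ℝ :=
      ![αf * ρ, αf * ρ * (u - cf), ρ * (αf * v + αs * cs * β2 * sgnR b1),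
        ρ * (αf * w + αs * cs * β3 * sgnR b1), Ψmf, 0,
        αs * a * β2 * Real.sqrt ρ, αs * a * β3 * Real.sqrt ρ]
    let rps : Fin 8 → ℝ :=
      ![αs * ρ, αs * ρ * (u + cs), ρ * (αs * v + αf * cf * β2 * sgnR b1),
        ρ * (αs * w + αf * cf * β3 * sgnR b1), Ψps, 0,
        -(αf * a * β2 * Real.sqrt ρ), -(αf * a * β3 * Real.sqrt ρ)]
    let rms : Fin 8 → ℝ :=
      ![αs * ρ, αs * ρ * (u - cs), ρ * (αs * v - αf * cf * β2 * sgnR b1),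
        ρ * (αs * w - αf * cf * β3 * sgnR b1), Ψms, 0,
        -(αf * a * β2 * Real.sqrt ρ), -(αf * a * β3 * Real.sqrt ρ)]
    let Rhat : Matrix (Fin 8) (Fin 8) ℝ :=
      (Matrix.of ![rpf, rpa, rps, rE, rD, rms, rma, rmf])ᵀ
    let Z : Matrix (Fin 8) (Fin 8) ℝ :=
      Matrix.diagonal ![1 / (2 * ρ * γ), p / (2 * ρ ^ 3), 1 / (2 * ρ * γ),
        ρ * (γ - 1) / γ, p / ρ, 1 / (2 * ρ * γ), p / (2 * ρ ^ 3), 1 / (2 * ρ * γ)]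
    let ca := |b1|
    let Λabs : Matrix (Fin 8) (Fin 8) ℝ :=
      Matrix.diagonal ![|u + cf|, |u + ca|, |u + cs|, |u|, |u|, |u - cs|, |u - ca|, |u - cf|]
    let D : Matrix (Fin 8) (Fin 8) ℝ := Rhat * Λabs * Z * Rhatᵀ
    D.PosSemidef ∧ ∀ x : Fin 8 → ℝ, -(1 / 2) * (x ⬝ᵥ D.mulVec x) ≤ 0 := by
  intro usq Ψpf Ψmf Ψps Ψms rE rD rpa rma rpf rmf rps rms Rhat Z ca Λabs D
  have hΛ : ∀ i, 0 ≤ (![|u + cf|, |u + ca|, |u + cs|, |u|, |u|, |u - cs|, |u - ca|, |u - cf|] :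
      Fin 8 → ℝ) i := by
    intro i
    fin_cases i <;> exact abs_nonneg _
  have hD : D.PosSemidef := posSemidef_mul_diagonal_mul_diagonal_mul_transpose Rhat hΛ
    (kepes_entropy_scaling_nonneg hγ hρ hp)
  refine ⟨hD, fun x => ?_⟩
  have hx : 0 ≤ x ⬝ᵥ D *ᵥ x := by simpa only [star_trivial] using hD.dotProduct_mulVec_nonneg x
  linarith

/-- the dissipation matrix D = R̂ |Λ| Z R̂ᵀ of the KEPES flux is symmetric
positive semidefinite, so the dissipation term never produces entropy of the wrong sign. -/
theorem kepes_dissipation_matrix_posSemidef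
    (γ ρ u v w p B1 B2 B3 a b1 b2 b3 bperp β2 β3 cf cs αf αs : ℝ)
    (hγ : 1 < γ) (hρ : 0 < ρ) (hp : 0 < p)
    (ha : a = Real.sqrt (γ * p / ρ))
    (hb1 : b1 = B1 / Real.sqrt ρ) (hb2 : b2 = B2 / Real.sqrt ρ) (hb3 : b3 = B3 / Real.sqrt ρ)
    (hbperp : bperp = Real.sqrt (b2 ^ 2 + b3 ^ 2)) (hbperp_pos : 0 < bperp)
    (hβ2 : β2 = b2 / bperp) (hβ3 : β3 = b3 / bperp)
    (hcf0 : 0 ≤ cf) (hcs0 : 0 ≤ cs)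
    (hcf : cf ^ 2 = ((a ^ 2 + (b1 ^ 2 + b2 ^ 2 + b3 ^ 2))
        + Real.sqrt ((a ^ 2 + (b1 ^ 2 + b2 ^ 2 + b3 ^ 2)) ^ 2 - 4 * a ^ 2 * b1 ^ 2)) / 2)
    (hcs : cs ^ 2 = ((a ^ 2 + (b1 ^ 2 + b2 ^ 2 + b3 ^ 2))
        - Real.sqrt ((a ^ 2 + (b1 ^ 2 + b2 ^ 2 + b3 ^ 2)) ^ 2 - 4 * a ^ 2 * b1 ^ 2)) / 2)
    (hαf : αf = Real.sqrt ((a ^ 2 - cs ^ 2) / (cf ^ 2 - cs ^ 2)))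
    (hαs : αs = Real.sqrt ((cf ^ 2 - a ^ 2) / (cf ^ 2 - cs ^ 2))) :
    let usq := u ^ 2 + v ^ 2 + w ^ 2
    let Ψpf := αf * ρ * usq / 2 + a * αs * ρ * bperp + αf * ρ * a ^ 2 / (γ - 1)
        + αf * cf * ρ * u - αs * cs * ρ * sgnR b1 * (v * β2 + w * β3)
    let Ψmf := αf * ρ * usq / 2 + a * αs * ρ * bperp + αf * ρ * a ^ 2 / (γ - 1)
        - αf * cf * ρ * u + αs * cs * ρ * sgnR b1 * (v * β2 + w * β3)
    let Ψps := αs * ρ * usq / 2 - a * αf * ρ * bperp + αs * ρ * a ^ 2 / (γ - 1)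
        + αs * cs * ρ * u + αf * cf * ρ * sgnR b1 * (v * β2 + w * β3)
    let Ψms := αs * ρ * usq / 2 - a * αf * ρ * bperp + αs * ρ * a ^ 2 / (γ - 1)
        - αs * cs * ρ * u - αf * cf * ρ * sgnR b1 * (v * β2 + w * β3)
    let rE : Fin 8 → ℝ := ![1, u, v, w, usq / 2, 0, 0, 0]
    let rD : Fin 8 → ℝ := ![0, 0, 0, 0, B1, 1, 0, 0]
    let rpa : Fin 8 → ℝ :=
      ![0, 0, ρ * Real.sqrt ρ * β3, -(ρ * Real.sqrt ρ * β2),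
        -(ρ * Real.sqrt ρ * (β2 * w - β3 * v)), 0, -(ρ * β3), ρ * β2]
    let rma : Fin 8 → ℝ :=
      ![0, 0, -(ρ * Real.sqrt ρ * β3), ρ * Real.sqrt ρ * β2,
        ρ * Real.sqrt ρ * (β2 * w - β3 * v), 0, -(ρ * β3), ρ * β2]
    let rpf : Fin 8 → ℝ :=
      ![αf * ρ, αf * ρ * (u + cf), ρ * (αf * v - αs * cs * β2 * sgnR b1),
        ρ * (αf * w - αs * cs * β3 * sgnR b1), Ψpf, 0,
        αs * a * β2 * Real.sqrt ρ, αs * a * β3 * Real.sqrt ρ]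
    let rmf : Fin 8 → ℝ :=
      ![αf * ρ, αf * ρ * (u - cf), ρ * (αf * v + αs * cs * β2 * sgnR b1),
        ρ * (αf * w + αs * cs * β3 * sgnR b1), Ψmf, 0,
        αs * a * β2 * Real.sqrt ρ, αs * a * β3 * Real.sqrt ρ]
    let rps : Fin 8 → ℝ :=
      ![αs * ρ, αs * ρ * (u + cs), ρ * (αs * v + αf * cf * β2 * sgnR b1),
        ρ * (αs * w + αf * cf * β3 * sgnR b1), Ψps, 0,
        -(αf * a * β2 * Real.sqrt ρ), -(αf * a * β3 * Real.sqrt ρ)]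
    let rms : Fin 8 → ℝ :=
      ![αs * ρ, αs * ρ * (u - cs), ρ * (αs * v - αf * cf * β2 * sgnR b1),
        ρ * (αs * w - αf * cf * β3 * sgnR b1), Ψms, 0,
        -(αf * a * β2 * Real.sqrt ρ), -(αf * a * β3 * Real.sqrt ρ)]
    let Rhat : Matrix (Fin 8) (Fin 8) ℝ :=
      (Matrix.of ![rpf, rpa, rps, rE, rD, rms, rma, rmf])ᵀ
    let Z : Matrix (Fin 8) (Fin 8) ℝ :=
      Matrix.diagonal ![1 / (2 * ρ * γ), p / (2 * ρ ^ 3), 1 / (2 * ρ * γ),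
        ρ * (γ - 1) / γ, p / ρ, 1 / (2 * ρ * γ), p / (2 * ρ ^ 3), 1 / (2 * ρ * γ)]
    let ca := |b1|
    let Λabs : Matrix (Fin 8) (Fin 8) ℝ :=
      Matrix.diagonal ![|u + cf|, |u + ca|, |u + cs|, |u|, |u|, |u - cs|, |u - ca|, |u - cf|]
    let D : Matrix (Fin 8) (Fin 8) ℝ := Rhat * Λabs * Z * Rhatᵀ
    D.PosSemidef ∧ ∀ x : Fin 8 → ℝ, -(1 / 2) * (x ⬝ᵥ D.mulVec x) ≤ 0 :=
  kepes_dissipation_matrix_posSemidef_general γ ρ u v w p B1 a b1 bperp β2 β3 cf cs αf αs hγ hρ hp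
end
end

section
/- (Eigenvector scaling lemma) Let n ≥ 1 and let A be a real n×n matrix that is diagonalizable over ℝ: A = R Λ R⁻¹ with R invertible and Λ diagonal. Let B be a symmetric positive definite real n×n matrix such that A·B is symmetric. Then there exists a symmetric positive definite matrix T with T Λ = Λ T such that, setting R̃ = R T (which is invertible), one has B = R̃ R̃ᵀ and A = R̃ Λ R̃⁻¹; consequently A·B = R̃ Λ R̃ᵀ. -/
/-!
Conjugating by `R⁻¹`, the symmetry of `A * B = R * Λ * R⁻¹ * B` says that `Λ * M` is symmetric
for the positive definite `M = R⁻¹ * B * R⁻¹ᵀ`, i.e. `Λ` commutes with `M`. The square root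
`T = √M` is positive definite and, being a continuous function of `M`, commutes with `Λ`; and
`B = R * M * Rᵀ = (R * T) * (R * T)ᵀ`.
-/

open Matrix
open scoped MatrixOrder ComplexOrder

namespace Matrix

variable {𝕜 m : Type*} [RCLike 𝕜] [Fintype m] [DecidableEq m]

lemma commute_of_isHermitian_conj_mul {R Λ B : Matrix m m 𝕜} (hR : IsUnit R)
    (hΛ : Λ.IsHermitian) (hB : B.IsHermitian) (hAB : (R * Λ * R⁻¹ * B).IsHermitian) :
    Commute Λ (R⁻¹ * B * R⁻¹ᴴ) := by
  have hdet : IsUnit R.det := (isUnit_iff_isUnit_det R).mp hR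
  have hconj : R⁻¹ * (R * Λ * R⁻¹ * B) * R⁻¹ᴴ = Λ * (R⁻¹ * B * R⁻¹ᴴ) := by
    simp only [Matrix.mul_assoc, nonsing_inv_mul_cancel_left R _ hdet]
  refine (hΛ.commute_iff (isHermitian_mul_mul_conjTranspose _ hB)).mpr ?_
  rw [← hconj]
  exact isHermitian_mul_mul_conjTranspose _ hAB

lemma PosDef.exists_sqrt_commute {M Λ : Matrix m m 𝕜} (hM : M.PosDef) (hΛ : Commute Λ M) :
    ∃ T : Matrix m m 𝕜, T.PosDef ∧ T * T = M ∧ Commute T Λ :=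
  ⟨CFC.sqrt M, (hM.isStrictlyPositive.sqrt).posDef, CFC.sqrt_mul_sqrt_self M hM.posSemidef.nonneg,
    CFC.sqrt_eq_cfc (a := M) ▸ hΛ.symm.cfc_nnreal _⟩

lemma exists_posDef_commute_and_eq_mul_conjTranspose {R Λ B : Matrix m m 𝕜} (hR : IsUnit R)
    (hΛ : Λ.IsHermitian) (hB : B.PosDef) (hAB : (R * Λ * R⁻¹ * B).IsHermitian) :
    ∃ T : Matrix m m 𝕜, T.PosDef ∧ Commute T Λ ∧ B = R * T * (R * T)ᴴ := by
  have hdet : IsUnit R.det := (isUnit_iff_isUnit_det R).mp hR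
  have hM : (R⁻¹ * B * R⁻¹ᴴ).PosDef :=
    hB.mul_mul_conjTranspose_same (vecMul_injective_iff_isUnit.mpr (isUnit_nonsing_inv_iff.mpr hR))
  obtain ⟨T, hT, hTT, hTΛ⟩ :=
    hM.exists_sqrt_commute (commute_of_isHermitian_conj_mul hR hΛ hB.isHermitian hAB)
  refine ⟨T, hT, hTΛ, ?_⟩
  calc B = R * (R⁻¹ * B * R⁻¹ᴴ) * Rᴴ := by
        rw [conjTranspose_nonsing_inv]
        simp only [Matrix.mul_assoc, mul_nonsing_inv_cancel_left R _ hdet,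
          nonsing_inv_mul_cancel_right Rᴴ _ ((isUnit_iff_isUnit_det _).mp hR.star)]
    _ = R * T * (R * T)ᴴ := by
        rw [← hTT, conjTranspose_mul, hT.isHermitian.eq]; simp only [Matrix.mul_assoc]

lemma conj_eq_conj_mul_of_commute {R Λ T : Matrix m m 𝕜} (hT : IsUnit T) (hTΛ : Commute T Λ) :
    R * Λ * R⁻¹ = R * T * Λ * (R * T)⁻¹ := by
  rw [mul_inv_rev, Matrix.mul_assoc R T, hTΛ.eq]
  simp only [Matrix.mul_assoc, mul_nonsing_inv_cancel_left T _ ((isUnit_iff_isUnit_det T).mp hT)]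

end Matrix

theorem eigenvector_scaling_general
    (n : ℕ)
    (A R Λ B : Matrix (Fin n) (Fin n) ℝ)
    (hR : IsUnit R) (hΛ : Λ.IsDiag) (hA : A = R * Λ * R⁻¹)
    (hB : B.PosDef) (hAB : (A * B).IsHermitian) :
    ∃ T : Matrix (Fin n) (Fin n) ℝ,
      T.PosDef ∧ T * Λ = Λ * T ∧ IsUnit (R * T) ∧
      B = (R * T) * (R * T)ᵀ ∧
      A = (R * T) * Λ * (R * T)⁻¹ ∧
      A * B = (R * T) * Λ * (R * T)ᵀ := by
  have hΛh : Λ.IsHermitian := by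
    rw [IsHermitian, conjTranspose_eq_transpose_of_trivial]; exact hΛ.isSymm
  obtain ⟨T, hT, hTΛ, hBT⟩ :=
    exists_posDef_commute_and_eq_mul_conjTranspose hR hΛh hB (hA ▸ hAB)
  rw [conjTranspose_eq_transpose_of_trivial] at hBT
  have hRT : IsUnit (R * T) := hR.mul hT.isUnit
  have hA' : A = R * T * Λ * (R * T)⁻¹ := hA.trans (conj_eq_conj_mul_of_commute hT.isUnit hTΛ)
  refine ⟨T, hT, hTΛ.eq, hRT, hBT, hA', ?_⟩
  rw [hA', hBT, Matrix.mul_assoc,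
    nonsing_inv_mul_cancel_left _ _ ((isUnit_iff_isUnit_det _).mp hRT)]

/-- Eigenvector scaling lemma, Barth. -/
theorem eigenvector_scaling
    (n : ℕ) (hn : 1 ≤ n)
    (A R Λ B : Matrix (Fin n) (Fin n) ℝ)
    (hR : IsUnit R) (hΛ : Λ.IsDiag) (hA : A = R * Λ * R⁻¹)
    (hB : B.PosDef) (hAB : (A * B).IsHermitian) :
    ∃ T : Matrix (Fin n) (Fin n) ℝ,
      T.PosDef ∧ T * Λ = Λ * T ∧ IsUnit (R * T) ∧
      B = (R * T) * (R * T)ᵀ ∧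
      A = (R * T) * Λ * (R * T)⁻¹ ∧
      A * B = (R * T) * Λ * (R * T)ᵀ :=
  eigenvector_scaling_general n A R Λ B hR hΛ hA hB hAB
end

section
/- Let γ > 1 and let two ideal-MHD states satisfy ρ_L,ρ_R,p_L,p_R > 0, ρ_L ≠ ρ_R and β_L ≠ β_R where β = ρ/(2p). Let 𝓗 be the discrete entropy Jacobian matrix built from these two states, let q = (ρ, ρu, ρv, ρw, E, B₁, B₂, B₃) with E = p/(γ−1) + ½ρ(u²+v²+w²) + ½(B₁²+B₂²+B₃²) denote the conservative variables, and let v denote the entropy variables. Then for every component index i ∈ {1,2,3,4,6,7,8} one has (𝓗 ⟦v⟧)_i = ⟦q⟧_i (equality holds exactly in every component except the total energy, i = 5). -/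
open Matrix

noncomputable section

/-!
Every row of `𝓗 ⟦v⟧` other than the energy row is a combination of three identities. The density
row collapses, once the kinetic terms cancel against `ū²`, to `ρ^ln ⟦s⟧ + 2 p^ln ⟦β⟧ = (1 - γ) ⟦ρ⟧`,
which is where the logarithmic means are needed. The momentum rows are `⟨u⟩` times the density row
plus `p̄ · 2⟨β⟩ ⟦u⟧ = ⟨ρ⟩ ⟦u⟧`, i.e. the product rule `⟦ρu⟧ = ⟨u⟩⟦ρ⟧ + ⟨ρ⟩⟦u⟧`; the magnetic rows
are `τ · 2⟨β⟩ ⟦B⟧ = ⟦B⟧`.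
-/

open Real

theorem lnM_mul_log_sub {x y : ℝ} (hx : 0 < x) (hy : 0 < y) (hxy : x ≠ y) :
    lnM x y * (log x - log y) = x - y :=
  div_mul_cancel₀ _ (sub_ne_zero.2 fun h => hxy (log_injOn_pos hx hy h))

theorem div_lnM_mul_sub {x y : ℝ} (hxy : x ≠ y) (c : ℝ) :
    c / lnM x y * (x - y) = c * (log x - log y) := by
  rw [lnM, div_div_eq_mul_div, div_mul_cancel₀ _ (sub_ne_zero.2 hxy)]

theorem log_div_two_mul {ρ p : ℝ} (hρ : ρ ≠ 0) (hp : p ≠ 0) :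
    log (ρ / (2 * p)) = log ρ - log 2 - log p := by
  rw [log_div hρ (mul_ne_zero two_ne_zero hp), log_mul two_ne_zero hp, sub_sub]

theorem div_two_mul_am_mul_add (a : ℝ) {x y : ℝ} (hxy : x + y ≠ 0) :
    a / (2 * am x y) * (x + y) = a := by
  rw [am, mul_div_cancel₀ _ two_ne_zero, div_mul_cancel₀ _ hxy]

/-- `(ρ^ln ⟦s⟧ + 2 p^ln ⟦β⟧) / (1 - γ) = ⟦ρ⟧`. As `2 p^ln ⟦β⟧ = ρ^ln ⟦ln β⟧` and
`ln β = ln ρ - ln 2 - ln p`, the pressure logarithms cancel and only `ρ^ln ⟦ln ρ⟧ = ⟦ρ⟧` remains. -/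
theorem lnM_entropy_jump_add_beta_jump {γ ρL pL ρR pR : ℝ} (hγ : γ ≠ 1)
    (hρL : 0 < ρL) (hρR : 0 < ρR) (hpL : 0 < pL) (hpR : 0 < pR)
    (hρ : ρL ≠ ρR) (hβ : ρL / (2 * pL) ≠ ρR / (2 * pR)) :
    (lnM ρL ρR * ((log pL - γ * log ρL) - (log pR - γ * log ρR))
      + 2 * (lnM ρL ρR / (2 * lnM (ρL / (2 * pL)) (ρR / (2 * pR))))
        * (ρL / (2 * pL) - ρR / (2 * pR))) / (γ - 1) = ρR - ρL := by
  have hpln : 2 * (lnM ρL ρR / (2 * lnM (ρL / (2 * pL)) (ρR / (2 * pR))))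
      * (ρL / (2 * pL) - ρR / (2 * pR))
      = lnM ρL ρR * (log (ρL / (2 * pL)) - log (ρR / (2 * pR))) := by
    rw [← div_lnM_mul_sub hβ]
    ring
  rw [div_eq_iff (sub_ne_zero.2 hγ), hpln, log_div_two_mul hρL.ne' hpL.ne',
    log_div_two_mul hρR.ne' hpR.ne']
  linear_combination (1 - γ) * lnM_mul_log_sub hρL hρR hρ

/-- the discrete entropy Jacobian 𝓗 maps the jump of the entropy
variables to the jump of the conservative variables in every component except the
total energy (the fifth component, index 4). -/
theorem discrete_entropy_jacobian_jump_identity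
    (γ ρL uL vL wL pL B1L B2L B3L ρR uR vR wR pR B1R B2R B3R : ℝ)
    (hγ : 1 < γ) (hρL : 0 < ρL) (hρR : 0 < ρR) (hpL : 0 < pL) (hpR : 0 < pR)
    (hρ : ρL ≠ ρR) (hβ : ρL / (2 * pL) ≠ ρR / (2 * pR)) :
    let βL := ρL / (2 * pL)
    let βR := ρR / (2 * pR)
    let sL := Real.log pL - γ * Real.log ρL
    let sR := Real.log pR - γ * Real.log ρR
    let vL8 : Fin 8 → ℝ :=
      ![(γ - sL) / (γ - 1) - βL * (uL ^ 2 + vL ^ 2 + wL ^ 2), 2 * βL * uL, 2 * βL * vL,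
        2 * βL * wL, -(2 * βL), 2 * βL * B1L, 2 * βL * B2L, 2 * βL * B3L]
    let vR8 : Fin 8 → ℝ :=
      ![(γ - sR) / (γ - 1) - βR * (uR ^ 2 + vR ^ 2 + wR ^ 2), 2 * βR * uR, 2 * βR * vR,
        2 * βR * wR, -(2 * βR), 2 * βR * B1R, 2 * βR * B2R, 2 * βR * B3R]
    let EL := pL / (γ - 1) + ρL * (uL ^ 2 + vL ^ 2 + wL ^ 2) / 2
        + (B1L ^ 2 + B2L ^ 2 + B3L ^ 2) / 2
    let ER := pR / (γ - 1) + ρR * (uR ^ 2 + vR ^ 2 + wR ^ 2) / 2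
        + (B1R ^ 2 + B2R ^ 2 + B3R ^ 2) / 2
    let jq : Fin 8 → ℝ :=
      ![ρR - ρL, ρR * uR - ρL * uL, ρR * vR - ρL * vL, ρR * wR - ρL * wL, ER - EL,
        B1R - B1L, B2R - B2L, B3R - B3L]
    let ρln := lnM ρL ρR
    let βln := lnM βL βR
    let pln := ρln / (2 * βln)
    let au := am uL uR
    let av := am vL vR
    let aw := am wL wR
    let aρ := am ρL ρR
    let aβ := am βL βR
    let aB1 := am B1L B1R
    let aB2 := am B2L B2R
    let aB3 := am B3L B3R
    let ub2 := 2 * (au ^ 2 + av ^ 2 + aw ^ 2)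
        - (am (uL ^ 2) (uR ^ 2) + am (vL ^ 2) (vR ^ 2) + am (wL ^ 2) (wR ^ 2))
    let Ebar := pln / (γ - 1) + ρln * ub2 / 2
    let pbar := aρ / (2 * aβ)
    let τ := 1 / (2 * aβ)
    let H55 := (1 / ρln) * (pln ^ 2 / (γ - 1) + Ebar ^ 2)
        + pbar * (au ^ 2 + av ^ 2 + aw ^ 2) + τ * (aB1 ^ 2 + aB2 ^ 2 + aB3 ^ 2)
    let Hd : Matrix (Fin 8) (Fin 8) ℝ := Matrix.of
      ![![ρln, ρln * au, ρln * av, ρln * aw, Ebar, 0, 0, 0],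
        ![ρln * au, ρln * au ^ 2 + pbar, ρln * au * av, ρln * au * aw, (Ebar + pbar) * au, 0, 0, 0],
        ![ρln * av, ρln * au * av, ρln * av ^ 2 + pbar, ρln * av * aw, (Ebar + pbar) * av, 0, 0, 0],
        ![ρln * aw, ρln * au * aw, ρln * av * aw, ρln * aw ^ 2 + pbar, (Ebar + pbar) * aw, 0, 0, 0],
        ![Ebar, (Ebar + pbar) * au, (Ebar + pbar) * av, (Ebar + pbar) * aw, H55,
          τ * aB1, τ * aB2, τ * aB3],
        ![0, 0, 0, 0, τ * aB1, τ, 0, 0],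
        ![0, 0, 0, 0, τ * aB2, 0, τ, 0],
        ![0, 0, 0, 0, τ * aB3, 0, 0, τ]]
    ∀ i : Fin 8, i ≠ 4 → Hd.mulVec (fun j => vR8 j - vL8 j) i = jq i := by
  intro βL βR sL sR vL8 vR8 EL ER jq ρln βln pln au av aw aρ aβ aB1 aB2 aB3 ub2
    Ebar pbar τ H55 Hd i hi
  have hβsum : βL + βR ≠ 0 := by positivity
  have hdensity : (ρln * (sL - sR) + 2 * pln * (βL - βR)) / (γ - 1) = ρR - ρL :=
    lnM_entropy_jump_add_beta_jump hγ.ne' hρL hρR hpL hpR hρ hβ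
  have hpbar : pbar * (βL + βR) = (ρL + ρR) / 2 := div_two_mul_am_mul_add aρ hβsum
  have hτ : τ * (βL + βR) = 1 := div_two_mul_am_mul_add 1 hβsum
  fin_cases i <;> simp only [Hd, jq, vL8, vR8, Ebar, ub2, au, av, aw, aB1, aB2, aB3, am, mulVec,
    dotProduct, Fin.sum_univ_eight, of_apply, cons_val, cons_val_zero, cons_val_one, cons_val',
    cons_val_fin_one, Fin.isValue, Fin.reduceFinMk, ne_eq, not_true_eq_false] at hi ⊢
  · linear_combination hdensity
  · linear_combination (uL + uR) / 2 * hdensity + (uR - uL) * hpbar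
  · linear_combination (vL + vR) / 2 * hdensity + (vR - vL) * hpbar
  · linear_combination (wL + wR) / 2 * hdensity + (wR - wL) * hpbar
  · linear_combination (B1R - B1L) * hτ
  · linear_combination (B2R - B2L) * hτ
  · linear_combination (B3R - B3L) * hτ

end
end

section
/- Let γ > 1 and let two ideal-MHD states satisfy ρ_L,ρ_R,p_L,p_R > 0, ρ_L ≠ ρ_R and β_L ≠ β_R where β = ρ/(2p). Then the discrete entropy Jacobian matrix 𝓗 built from these two states is symmetric positive definite. -/
open Matrix

noncomputable section

/-!
Completing the squares in the quadratic form of 𝓗 gives `𝓗 = Lᵀ D L` with `L` unipotent and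
`D = diag(ρ^ln, p̄, p̄, p̄, (p^ln)² / ((γ - 1) ρ^ln), τ, τ, τ)`. The diagonal is positive because
arithmetic means of positive numbers and logarithmic means of distinct positive numbers are
positive.
-/

lemma am_pos {x y : ℝ} (hx : 0 < x) (hy : 0 < y) : 0 < am x y := by
  unfold am
  positivity

lemma lnM_pos {x y : ℝ} (hx : 0 < x) (hy : 0 < y) (hxy : x ≠ y) : 0 < lnM x y := by
  unfold lnM
  rcases hxy.lt_or_gt with h | h
  · exact div_pos_of_neg_of_neg (by linarith) (by linarith [Real.log_lt_log hx h])
  · exact div_pos (by linarith) (by linarith [Real.log_lt_log hy h])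

/-- The matrix 𝓗 with `ρ = ρ^ln`, `E = Ē`, `p = p̄`, `κ = (p^ln)² / (γ - 1)`, mean velocity
`(u, v, w)` and mean magnetic field `(B₁, B₂, B₃)`. -/
def entropyJacobian (ρ E p τ κ u v w B₁ B₂ B₃ : ℝ) : Matrix (Fin 8) (Fin 8) ℝ :=
  !![ρ, ρ * u, ρ * v, ρ * w, E, 0, 0, 0;
    ρ * u, ρ * u ^ 2 + p, ρ * u * v, ρ * u * w, (E + p) * u, 0, 0, 0;
    ρ * v, ρ * u * v, ρ * v ^ 2 + p, ρ * v * w, (E + p) * v, 0, 0, 0;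
    ρ * w, ρ * u * w, ρ * v * w, ρ * w ^ 2 + p, (E + p) * w, 0, 0, 0;
    E, (E + p) * u, (E + p) * v, (E + p) * w,
      (1 / ρ) * (κ + E ^ 2) + p * (u ^ 2 + v ^ 2 + w ^ 2) + τ * (B₁ ^ 2 + B₂ ^ 2 + B₃ ^ 2),
      τ * B₁, τ * B₂, τ * B₃;
    0, 0, 0, 0, τ * B₁, τ, 0, 0;
    0, 0, 0, 0, τ * B₂, 0, τ, 0;
    0, 0, 0, 0, τ * B₃, 0, 0, τ]

def entropyFactor (ρ E u v w B₁ B₂ B₃ : ℝ) : Matrix (Fin 8) (Fin 8) ℝ :=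
  !![1, u, v, w, E / ρ, 0, 0, 0;
    0, 1, 0, 0, u, 0, 0, 0;
    0, 0, 1, 0, v, 0, 0, 0;
    0, 0, 0, 1, w, 0, 0, 0;
    0, 0, 0, 0, 1, 0, 0, 0;
    0, 0, 0, 0, B₁, 1, 0, 0;
    0, 0, 0, 0, B₂, 0, 1, 0;
    0, 0, 0, 0, B₃, 0, 0, 1]

section

variable {ρ E u v w B₁ B₂ B₃ : ℝ}

lemma entropyFactor_mulVec (x : Fin 8 → ℝ) :
    entropyFactor ρ E u v w B₁ B₂ B₃ *ᵥ x =
      ![x 0 + u * x 1 + v * x 2 + w * x 3 + E / ρ * x 4, x 1 + u * x 4, x 2 + v * x 4,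
        x 3 + w * x 4, x 4, x 5 + B₁ * x 4, x 6 + B₂ * x 4, x 7 + B₃ * x 4] := by
  ext i
  fin_cases i <;>
    simp only [entropyFactor, mulVec, dotProduct, Fin.sum_univ_eight, of_apply, cons_val,
      Fin.zero_eta, Fin.mk_one, Fin.reduceFinMk] <;>
    ring

lemma entropyFactor_mulVec_injective :
    Function.Injective (entropyFactor ρ E u v w B₁ B₂ B₃).mulVec := by
  rw [← coe_mulVecLin, injective_iff_map_eq_zero]
  intro x hx
  rw [coe_mulVecLin, entropyFactor_mulVec] at hx
  have row (i : Fin 8) := congrFun hx i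
  have h4 : x 4 = 0 := row 4
  simp only [h4, mul_zero, add_zero] at row
  have h1 : x 1 = 0 := row 1
  have h2 : x 2 = 0 := row 2
  have h3 : x 3 = 0 := row 3
  have h0 : x 0 = 0 := by simpa [h1, h2, h3] using row 0
  ext i
  fin_cases i
  exacts [h0, h1, h2, h3, h4, row 5, row 6, row 7]

lemma entropyJacobian_eq_transpose_mul_diagonal_mul (hρ : ρ ≠ 0) (p τ κ : ℝ) :
    entropyJacobian ρ E p τ κ u v w B₁ B₂ B₃ =
      (entropyFactor ρ E u v w B₁ B₂ B₃)ᵀ * diagonal ![ρ, p, p, p, κ / ρ, τ, τ, τ] *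
        entropyFactor ρ E u v w B₁ B₂ B₃ := by
  ext i j
  rw [mul_apply]
  simp only [mul_diagonal, transpose_apply, Fin.sum_univ_eight]
  fin_cases i <;> fin_cases j <;>
    simp only [entropyJacobian, entropyFactor, of_apply, cons_val, Fin.zero_eta, Fin.mk_one,
      Fin.reduceFinMk] <;>
    field_simp <;> ring

lemma entropyJacobian_posDef {p τ κ : ℝ} (hρ : 0 < ρ) (hp : 0 < p) (hτ : 0 < τ)
    (hκ : 0 < κ) : (entropyJacobian ρ E p τ κ u v w B₁ B₂ B₃).PosDef := by
  rw [entropyJacobian_eq_transpose_mul_diagonal_mul hρ.ne',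
    ← conjTranspose_eq_transpose_of_trivial]
  refine .conjTranspose_mul_mul_same ?_ entropyFactor_mulVec_injective
  rw [posDef_diagonal_iff]
  intro i
  fin_cases i <;> simp [hρ, hp, hτ, div_pos hκ hρ]

end

/-- the discrete entropy Jacobian matrix 𝓗 is symmetric positive definite. -/
theorem discrete_entropy_jacobian_posDef
    (γ ρL uL vL wL pL B1L B2L B3L ρR uR vR wR pR B1R B2R B3R : ℝ)
    (hγ : 1 < γ) (hρL : 0 < ρL) (hρR : 0 < ρR) (hpL : 0 < pL) (hpR : 0 < pR)
    (hρ : ρL ≠ ρR) (hβ : ρL / (2 * pL) ≠ ρR / (2 * pR)) :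
    let βL := ρL / (2 * pL)
    let βR := ρR / (2 * pR)
    let ρln := lnM ρL ρR
    let βln := lnM βL βR
    let pln := ρln / (2 * βln)
    let au := am uL uR
    let av := am vL vR
    let aw := am wL wR
    let aρ := am ρL ρR
    let aβ := am βL βR
    let aB1 := am B1L B1R
    let aB2 := am B2L B2R
    let aB3 := am B3L B3R
    let ub2 := 2 * (au ^ 2 + av ^ 2 + aw ^ 2)
        - (am (uL ^ 2) (uR ^ 2) + am (vL ^ 2) (vR ^ 2) + am (wL ^ 2) (wR ^ 2))
    let Ebar := pln / (γ - 1) + ρln * ub2 / 2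
    let pbar := aρ / (2 * aβ)
    let τ := 1 / (2 * aβ)
    let H55 := (1 / ρln) * (pln ^ 2 / (γ - 1) + Ebar ^ 2)
        + pbar * (au ^ 2 + av ^ 2 + aw ^ 2) + τ * (aB1 ^ 2 + aB2 ^ 2 + aB3 ^ 2)
    let Hd : Matrix (Fin 8) (Fin 8) ℝ := Matrix.of
      ![![ρln, ρln * au, ρln * av, ρln * aw, Ebar, 0, 0, 0],
        ![ρln * au, ρln * au ^ 2 + pbar, ρln * au * av, ρln * au * aw, (Ebar + pbar) * au, 0, 0, 0],
        ![ρln * av, ρln * au * av, ρln * av ^ 2 + pbar, ρln * av * aw, (Ebar + pbar) * av, 0, 0, 0],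
        ![ρln * aw, ρln * au * aw, ρln * av * aw, ρln * aw ^ 2 + pbar, (Ebar + pbar) * aw, 0, 0, 0],
        ![Ebar, (Ebar + pbar) * au, (Ebar + pbar) * av, (Ebar + pbar) * aw, H55,
          τ * aB1, τ * aB2, τ * aB3],
        ![0, 0, 0, 0, τ * aB1, τ, 0, 0],
        ![0, 0, 0, 0, τ * aB2, 0, τ, 0],
        ![0, 0, 0, 0, τ * aB3, 0, 0, τ]]
    Hd.PosDef := by
  intro βL βR ρln βln pln au av aw aρ aβ aB1 aB2 aB3 ub2 Ebar pbar τ H55 Hd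
  have hβL : 0 < βL := by positivity
  have hβR : 0 < βR := by positivity
  have hρln : 0 < ρln := lnM_pos hρL hρR hρ
  have hβln : 0 < βln := lnM_pos hβL hβR hβ
  have haβ : 0 < aβ := am_pos hβL hβR
  have hpbar : 0 < pbar := div_pos (am_pos hρL hρR) (by positivity)
  have hτ : 0 < τ := by positivity
  have hκ : 0 < pln ^ 2 / (γ - 1) := div_pos (pow_pos (by positivity) 2) (by linarith)
  exact entropyJacobian_posDef hρln hpbar hτ hκ

end
end

section
/- Let γ > 1 and consider an ideal-MHD state with ρ > 0, p > 0. The entropy potential φ := v(q) · f(q) − F(q) satisfies φ = ρu + (ρ/p)(½ u(B₁² + B₂² + B₃²) − B₁(uB₁ + vB₂ + wB₃)), where v is the vector of entropy variables, f is the x-direction flux, and F = uS is the x-direction entropy flux. -/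
set_option maxHeartbeats 2000000


open Matrix

/-- the entropy potential of the ideal MHD system. -/
theorem entropy_potential_formula
    (γ ρ u v w p B1 B2 B3 : ℝ) (hγ : 1 < γ) (hρ : 0 < ρ) (hp : 0 < p) :
    let β := ρ / (2 * p)
    let s := Real.log p - γ * Real.log ρ
    let S := -(ρ * s) / (γ - 1)
    let vv : Fin 8 → ℝ :=
      ![(γ - s) / (γ - 1) - β * (u ^ 2 + v ^ 2 + w ^ 2), 2 * β * u, 2 * β * v, 2 * β * w,
        -(2 * β), 2 * β * B1, 2 * β * B2, 2 * β * B3]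
    let f : Fin 8 → ℝ :=
      ![ρ * u,
        ρ * u ^ 2 + p + (B1 ^ 2 + B2 ^ 2 + B3 ^ 2) / 2 - B1 ^ 2,
        ρ * u * v - B1 * B2,
        ρ * u * w - B1 * B3,
        u * (ρ * (u ^ 2 + v ^ 2 + w ^ 2) / 2 + γ * p / (γ - 1) + (B1 ^ 2 + B2 ^ 2 + B3 ^ 2))
          - B1 * (u * B1 + v * B2 + w * B3),
        0,
        u * B2 - v * B1,
        u * B3 - w * B1]
    vv ⬝ᵥ f - u * S =
      ρ * u + (ρ / p) * (u * (B1 ^ 2 + B2 ^ 2 + B3 ^ 2) / 2 - B1 * (u * B1 + v * B2 + w * B3)) := by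
  intro β s S vv f
  have h1 : γ - 1 ≠ 0 := by linarith
  have h2 : p ≠ 0 := hp.ne'
  simp only [vv, f, S, s, β, dotProduct, Fin.sum_univ_succ, Fin.sum_univ_zero,
    Matrix.cons_val_zero, Matrix.cons_val_succ, add_zero]
  field_simp
  ring
end

section
/- Let γ > 1 and consider an ideal-MHD state with ρ > 0 and p > 0. Then the 8×8 entropy Jacobian matrix H, with a² = γp/ρ, E = p/(γ−1) + ½ρ‖u‖² + ½‖B‖², h = a²/(γ−1) + ½‖u‖², and rows (ρ, ρu, ρv, ρw, E−½‖B‖², 0,0,0); (ρu, ρu²+p, ρuv, ρuw, ρhu, 0,0,0); (ρv, ρuv, ρv²+p, ρvw, ρhv, 0,0,0); (ρw, ρuw, ρvw, ρw²+p, ρhw, 0,0,0); (E−½‖B‖², ρhu, ρhv, ρhw, ρh² − a²p/(γ−1) + a²‖B‖²/γ, pB₁/ρ, pB₂/ρ, pB₃/ρ); (0,0,0,0,pB₁/ρ, p/ρ, 0, 0); (0,0,0,0,pB₂/ρ, 0, p/ρ, 0); (0,0,0,0,pB₃/ρ, 0, 0, p/ρ), is symmetric positive definite. -/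
open Matrix

noncomputable section

/-!
With `c = h - p/ρ = p/(ρ(γ-1)) + ‖u‖²/2`, the quadratic form of `H` is the weighted sum of squares
  `ρ (x₀ + u x₁ + v x₂ + w x₃ + c x₄)² + p ((x₁ + u x₄)² + (x₂ + v x₄)² + (x₃ + w x₄)²)`
  `+ p/ρ ((x₅ + B₁ x₄)² + (x₆ + B₂ x₄)² + (x₇ + B₃ x₄)²) + p²/(ρ(γ-1)) x₄²`,
i.e. `H = Lᴴ D L` with `L` invertible and `D` diagonal with positive entries.
-/

namespace IdealMHD

def entropyJacobian (γ ρ u v w p B1 B2 B3 : ℝ) : Matrix (Fin 8) (Fin 8) ℝ :=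
  let a2 := γ * p / ρ
  let usq := u ^ 2 + v ^ 2 + w ^ 2
  let Bsq := B1 ^ 2 + B2 ^ 2 + B3 ^ 2
  let E := p / (γ - 1) + ρ * usq / 2 + Bsq / 2
  let hh := a2 / (γ - 1) + usq / 2
  Matrix.of
    ![![ρ, ρ * u, ρ * v, ρ * w, E - Bsq / 2, 0, 0, 0],
      ![ρ * u, ρ * u ^ 2 + p, ρ * u * v, ρ * u * w, ρ * hh * u, 0, 0, 0],
      ![ρ * v, ρ * u * v, ρ * v ^ 2 + p, ρ * v * w, ρ * hh * v, 0, 0, 0],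
      ![ρ * w, ρ * u * w, ρ * v * w, ρ * w ^ 2 + p, ρ * hh * w, 0, 0, 0],
      ![E - Bsq / 2, ρ * hh * u, ρ * hh * v, ρ * hh * w,
        ρ * hh ^ 2 - a2 * p / (γ - 1) + a2 * Bsq / γ,
        p * B1 / ρ, p * B2 / ρ, p * B3 / ρ],
      ![0, 0, 0, 0, p * B1 / ρ, p / ρ, 0, 0],
      ![0, 0, 0, 0, p * B2 / ρ, 0, p / ρ, 0],
      ![0, 0, 0, 0, p * B3 / ρ, 0, 0, p / ρ]]

def ldlFactor (γ ρ u v w p B1 B2 B3 : ℝ) : Matrix (Fin 8) (Fin 8) ℝ :=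
  let c := p / (ρ * (γ - 1)) + (u ^ 2 + v ^ 2 + w ^ 2) / 2
  Matrix.of
    ![![1, u, v, w, c, 0, 0, 0],
      ![0, 1, 0, 0, u, 0, 0, 0],
      ![0, 0, 1, 0, v, 0, 0, 0],
      ![0, 0, 0, 1, w, 0, 0, 0],
      ![0, 0, 0, 0, 1, 0, 0, 0],
      ![0, 0, 0, 0, B1, 1, 0, 0],
      ![0, 0, 0, 0, B2, 0, 1, 0],
      ![0, 0, 0, 0, B3, 0, 0, 1]]

def ldlFactorInv (γ ρ u v w p B1 B2 B3 : ℝ) : Matrix (Fin 8) (Fin 8) ℝ :=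
  let c := p / (ρ * (γ - 1)) + (u ^ 2 + v ^ 2 + w ^ 2) / 2
  Matrix.of
    ![![1, -u, -v, -w, u ^ 2 + v ^ 2 + w ^ 2 - c, 0, 0, 0],
      ![0, 1, 0, 0, -u, 0, 0, 0],
      ![0, 0, 1, 0, -v, 0, 0, 0],
      ![0, 0, 0, 1, -w, 0, 0, 0],
      ![0, 0, 0, 0, 1, 0, 0, 0],
      ![0, 0, 0, 0, -B1, 1, 0, 0],
      ![0, 0, 0, 0, -B2, 0, 1, 0],
      ![0, 0, 0, 0, -B3, 0, 0, 1]]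

def ldlWeights (γ ρ p : ℝ) : Fin 8 → ℝ :=
  ![ρ, p, p, p, p ^ 2 / (ρ * (γ - 1)), p / ρ, p / ρ, p / ρ]

lemma ldlFactorInv_mul_ldlFactor (γ ρ u v w p B1 B2 B3 : ℝ) :
    ldlFactorInv γ ρ u v w p B1 B2 B3 * ldlFactor γ ρ u v w p B1 B2 B3 = 1 := by
  ext i j
  fin_cases i <;> fin_cases j <;>
    simp [ldlFactorInv, ldlFactor, mul_apply, Fin.sum_univ_succ, one_apply]
  all_goals ring

lemma ldlFactor_mulVec_injective (γ ρ u v w p B1 B2 B3 : ℝ) :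
    Function.Injective (ldlFactor γ ρ u v w p B1 B2 B3).mulVec :=
  mulVec_injective_of_isUnit <| (isUnit_iff_isUnit_det _).2 <|
    isUnit_det_of_left_inverse (ldlFactorInv_mul_ldlFactor γ ρ u v w p B1 B2 B3)

lemma ldlWeights_pos {γ ρ p : ℝ} (hγ : 1 < γ) (hρ : 0 < ρ) (hp : 0 < p) (i : Fin 8) :
    0 < ldlWeights γ ρ p i := by
  have hγ1 : 0 < γ - 1 := sub_pos.2 hγ
  fin_cases i <;> simp [ldlWeights] <;> positivity

set_option maxHeartbeats 1000000 in
lemma entropyJacobian_eq_ldl (γ ρ u v w p B1 B2 B3 : ℝ) (hγ₀ : γ ≠ 0) (hγ₁ : γ ≠ 1)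
    (hρ : ρ ≠ 0) :
    entropyJacobian γ ρ u v w p B1 B2 B3 =
      (ldlFactor γ ρ u v w p B1 B2 B3)ᴴ * diagonal (ldlWeights γ ρ p) *
        ldlFactor γ ρ u v w p B1 B2 B3 := by
  have hγ1 : γ - 1 ≠ 0 := sub_ne_zero.2 hγ₁
  ext i j
  simp only [mul_apply, conjTranspose_apply, star_trivial, Fin.sum_univ_eight]
  fin_cases i <;> fin_cases j <;>
    simp [entropyJacobian, ldlFactor, ldlWeights, -mul_eq_mul_left_iff, -mul_eq_mul_right_iff]
  all_goals field_simp
  all_goals ring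

end IdealMHD

/-- the entropy Jacobian matrix H of the ideal MHD system is symmetric
positive definite. -/
theorem entropy_jacobian_posDef
    (γ ρ u v w p B1 B2 B3 : ℝ) (hγ : 1 < γ) (hρ : 0 < ρ) (hp : 0 < p) :
    let a2 := γ * p / ρ
    let usq := u ^ 2 + v ^ 2 + w ^ 2
    let Bsq := B1 ^ 2 + B2 ^ 2 + B3 ^ 2
    let E := p / (γ - 1) + ρ * usq / 2 + Bsq / 2
    let hh := a2 / (γ - 1) + usq / 2
    let H : Matrix (Fin 8) (Fin 8) ℝ := Matrix.of
      ![![ρ, ρ * u, ρ * v, ρ * w, E - Bsq / 2, 0, 0, 0],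
        ![ρ * u, ρ * u ^ 2 + p, ρ * u * v, ρ * u * w, ρ * hh * u, 0, 0, 0],
        ![ρ * v, ρ * u * v, ρ * v ^ 2 + p, ρ * v * w, ρ * hh * v, 0, 0, 0],
        ![ρ * w, ρ * u * w, ρ * v * w, ρ * w ^ 2 + p, ρ * hh * w, 0, 0, 0],
        ![E - Bsq / 2, ρ * hh * u, ρ * hh * v, ρ * hh * w,
          ρ * hh ^ 2 - a2 * p / (γ - 1) + a2 * Bsq / γ,
          p * B1 / ρ, p * B2 / ρ, p * B3 / ρ],
        ![0, 0, 0, 0, p * B1 / ρ, p / ρ, 0, 0],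
        ![0, 0, 0, 0, p * B2 / ρ, 0, p / ρ, 0],
        ![0, 0, 0, 0, p * B3 / ρ, 0, 0, p / ρ]]
    H.PosDef := by
  show (IdealMHD.entropyJacobian γ ρ u v w p B1 B2 B3).PosDef
  rw [IdealMHD.entropyJacobian_eq_ldl γ ρ u v w p B1 B2 B3 (by positivity) hγ.ne' hρ.ne']
  exact (PosDef.diagonal (IdealMHD.ldlWeights_pos hγ hρ hp)).conjTranspose_mul_mul_same
    (IdealMHD.ldlFactor_mulVec_injective γ ρ u v w p B1 B2 B3)

end
end

section
/- Let γ > 1 and define Ω := {(ρ, m₁, m₂, m₃, E, B₁, B₂, B₃) ∈ ℝ⁸ : ρ > 0 and E − (m₁² + m₂² + m₃²)/(2ρ) − ½(B₁² + B₂² + B₃²) > 0}. Then Ω is an open convex subset of ℝ⁸, and the mathematical entropy function S : Ω → ℝ given by S(q) = −ρ(ln p − γ ln ρ)/(γ−1), where p = (γ−1)(E − ‖m‖²/(2ρ) − ½‖B‖²), is strictly convex on Ω. -/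
/-!
Writing `p = (γ - 1) e` for the pressure, the entropy is `η(ρ, p) = -ρ (log p - γ log ρ) / (γ - 1)`
and `(γ - 1) η(ρ, p) = (γ - 1) ρ log ρ + ρ (-log (p / ρ))`: a strictly convex function of `ρ` plus
the perspective of the strictly convex `-log`. Hence `η` is strictly convex on the positive
quadrant, and it is strictly decreasing in `p`. The internal energy
`e = E - |m|² / 2ρ - |B|² / 2` is concave, and along a segment of constant density its concavity
defect is a positive definite quadratic form in `(m, B)`. So a segment between distinct states
either moves `(ρ, p)`, where `η` is strictly convex, or keeps `(ρ, p)` fixed and moves `(m, B)`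
(if only `E` moved, `e` would change), where `e` is strictly concave.
-/

open Real Set

section Perspective

variable {E : Type*} [AddCommGroup E] [Module ℝ E] {s : Set E} {f : E → ℝ}
  {ρ₁ ρ₂ a b : ℝ} {x₁ x₂ : E}

theorem inv_smul_add_eq_weighted (hρ : a * ρ₁ + b * ρ₂ ≠ 0) (hρ₁ : ρ₁ ≠ 0) (hρ₂ : ρ₂ ≠ 0) :
    (a * ρ₁ + b * ρ₂)⁻¹ • (a • x₁ + b • x₂) =
      (a * ρ₁ / (a * ρ₁ + b * ρ₂)) • (ρ₁⁻¹ • x₁) + (b * ρ₂ / (a * ρ₁ + b * ρ₂)) • (ρ₂⁻¹ • x₂) := by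
  simp only [smul_smul, smul_add]
  congr 2 <;> field_simp

theorem ConvexOn.perspective_le (hf : ConvexOn ℝ s f) (hρ₁ : 0 < ρ₁) (hρ₂ : 0 < ρ₂)
    (hx₁ : ρ₁⁻¹ • x₁ ∈ s) (hx₂ : ρ₂⁻¹ • x₂ ∈ s) (ha : 0 ≤ a) (hb : 0 ≤ b) (hab : a + b = 1) :
    (a * ρ₁ + b * ρ₂) * f ((a * ρ₁ + b * ρ₂)⁻¹ • (a • x₁ + b • x₂)) ≤
      a * (ρ₁ * f (ρ₁⁻¹ • x₁)) + b * (ρ₂ * f (ρ₂⁻¹ • x₂)) := by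
  have hρ : 0 < a * ρ₁ + b * ρ₂ := by simpa using convex_Ioi (0 : ℝ) hρ₁ hρ₂ ha hb hab
  have hw : a * ρ₁ / (a * ρ₁ + b * ρ₂) + b * ρ₂ / (a * ρ₁ + b * ρ₂) = 1 := by
    rw [← add_div, div_self hρ.ne']
  have hjensen := hf.2 hx₁ hx₂ (by positivity) (by positivity) hw
  rw [← inv_smul_add_eq_weighted hρ.ne' hρ₁.ne' hρ₂.ne', smul_eq_mul, smul_eq_mul]
    at hjensen
  calc (a * ρ₁ + b * ρ₂) * f ((a * ρ₁ + b * ρ₂)⁻¹ • (a • x₁ + b • x₂))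
      ≤ (a * ρ₁ + b * ρ₂) * (a * ρ₁ / (a * ρ₁ + b * ρ₂) * f (ρ₁⁻¹ • x₁) +
          b * ρ₂ / (a * ρ₁ + b * ρ₂) * f (ρ₂⁻¹ • x₂)) := by gcongr
    _ = _ := by field_simp

theorem StrictConvexOn.perspective_lt (hf : StrictConvexOn ℝ s f) (hρ₁ : 0 < ρ₁) (hρ₂ : 0 < ρ₂)
    (hx₁ : ρ₁⁻¹ • x₁ ∈ s) (hx₂ : ρ₂⁻¹ • x₂ ∈ s) (hx : ρ₁⁻¹ • x₁ ≠ ρ₂⁻¹ • x₂)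
    (ha : 0 < a) (hb : 0 < b) :
    (a * ρ₁ + b * ρ₂) * f ((a * ρ₁ + b * ρ₂)⁻¹ • (a • x₁ + b • x₂)) <
      a * (ρ₁ * f (ρ₁⁻¹ • x₁)) + b * (ρ₂ * f (ρ₂⁻¹ • x₂)) := by
  have hρ : 0 < a * ρ₁ + b * ρ₂ := by positivity
  have hw : a * ρ₁ / (a * ρ₁ + b * ρ₂) + b * ρ₂ / (a * ρ₁ + b * ρ₂) = 1 := by
    rw [← add_div, div_self hρ.ne']
  have hjensen := hf.2 hx₁ hx₂ hx (by positivity) (by positivity) hw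
  rw [← inv_smul_add_eq_weighted hρ.ne' hρ₁.ne' hρ₂.ne', smul_eq_mul, smul_eq_mul]
    at hjensen
  calc (a * ρ₁ + b * ρ₂) * f ((a * ρ₁ + b * ρ₂)⁻¹ • (a • x₁ + b • x₂))
      < (a * ρ₁ + b * ρ₂) * (a * ρ₁ / (a * ρ₁ + b * ρ₂) * f (ρ₁⁻¹ • x₁) +
          b * ρ₂ / (a * ρ₁ + b * ρ₂) * f (ρ₂⁻¹ • x₂)) := by gcongr
    _ = _ := by field_simp

end Perspective

namespace IdealMHD

noncomputable def entropyDensity (γ : ℝ) (v : ℝ × ℝ) : ℝ :=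
  -(v.1 * (log v.2 - γ * log v.1)) / (γ - 1)

theorem sub_one_mul_entropyDensity {γ ρ p : ℝ} (hγ : γ ≠ 1) (hρ : 0 < ρ) (hp : 0 < p) :
    (γ - 1) * entropyDensity γ (ρ, p) = (γ - 1) * (ρ * log ρ) + ρ * -log (ρ⁻¹ * p) := by
  have : γ - 1 ≠ 0 := sub_ne_zero.2 hγ
  rw [entropyDensity, log_mul (inv_ne_zero hρ.ne') hp.ne', log_inv]
  field_simp
  ring

theorem strictConvexOn_entropyDensity {γ : ℝ} (hγ : 1 < γ) :
    StrictConvexOn ℝ (Ioi 0 ×ˢ Ioi 0) (entropyDensity γ) := by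
  refine ⟨(convex_Ioi 0).prod (convex_Ioi 0), ?_⟩
  rintro ⟨ρ₁, p₁⟩ ⟨hρ₁ : 0 < ρ₁, hp₁ : 0 < p₁⟩ ⟨ρ₂, p₂⟩ ⟨hρ₂ : 0 < ρ₂, hp₂ : 0 < p₂⟩ hne
    a b ha hb hab
  have hρ : 0 < a * ρ₁ + b * ρ₂ := by positivity
  have hp : 0 < a * p₁ + b * p₂ := by positivity
  have hmem : ∀ {ρ p : ℝ}, 0 < ρ → 0 < p → ρ⁻¹ • p ∈ Ioi (0 : ℝ) := fun hρ hp => by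
    simpa using mul_pos (inv_pos.2 hρ) hp
  have hmulLog := strictConvexOn_mul_log
  have hnegLog := strictConcaveOn_log_Ioi.neg
  have hM := hmulLog.convexOn.2 (mem_Ici.2 hρ₁.le) (mem_Ici.2 hρ₂.le) ha.le hb.le hab
  have hP := hnegLog.convexOn.perspective_le hρ₁ hρ₂ (hmem hρ₁ hp₁) (hmem hρ₂ hp₂) ha.le hb.le hab
  have hstrict : (γ - 1) * ((a * ρ₁ + b * ρ₂) * log (a * ρ₁ + b * ρ₂)) +
        (a * ρ₁ + b * ρ₂) * -log ((a * ρ₁ + b * ρ₂)⁻¹ * (a * p₁ + b * p₂)) <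
      (γ - 1) * (a * (ρ₁ * log ρ₁) + b * (ρ₂ * log ρ₂)) +
        (a * (ρ₁ * -log (ρ₁⁻¹ * p₁)) + b * (ρ₂ * -log (ρ₂⁻¹ * p₂))) := by
    by_cases hρeq : ρ₁ = ρ₂
    · subst hρeq
      have hratio : ρ₁⁻¹ • p₁ ≠ ρ₁⁻¹ • p₂ := fun h =>
        hne (by rw [smul_right_inj (inv_ne_zero hρ₁.ne')] at h; rw [h])
      have hP' := hnegLog.perspective_lt hρ₁ hρ₁ (hmem hρ₁ hp₁) (hmem hρ₁ hp₂) hratio ha hb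
      simp only [smul_eq_mul, Pi.neg_apply] at hM hP'
      linarith [mul_le_mul_of_nonneg_left hM (sub_nonneg.2 hγ.le)]
    · have hM' := hmulLog.2 (mem_Ici.2 hρ₁.le) (mem_Ici.2 hρ₂.le) hρeq ha hb hab
      simp only [smul_eq_mul, Pi.neg_apply] at hM' hP
      linarith [mul_lt_mul_of_pos_left hM' (sub_pos.2 hγ)]
  simp only [Prod.smul_mk, Prod.mk_add_mk, smul_eq_mul]
  refine lt_of_mul_lt_mul_left ?_ (sub_nonneg.2 hγ.le)
  rw [mul_add, mul_left_comm _ a, mul_left_comm _ b, sub_one_mul_entropyDensity hγ.ne' hρ hp,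
    sub_one_mul_entropyDensity hγ.ne' hρ₁ hp₁, sub_one_mul_entropyDensity hγ.ne' hρ₂ hp₂]
  linarith

theorem strictAntiOn_entropyDensity {γ ρ : ℝ} (hγ : 1 < γ) (hρ : 0 < ρ) :
    StrictAntiOn (fun p => entropyDensity γ (ρ, p)) (Ioi 0) := by
  intro p (hp : 0 < p) p' _ hpp'
  have : 0 < γ - 1 := sub_pos.2 hγ
  simp only [entropyDensity]
  gcongr

noncomputable def internalEnergy (q : Fin 8 → ℝ) : ℝ :=
  q 4 - (q 1 ^ 2 + q 2 ^ 2 + q 3 ^ 2) / (2 * q 0) - (q 5 ^ 2 + q 6 ^ 2 + q 7 ^ 2) / 2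

def admissibleStates : Set (Fin 8 → ℝ) := {q | 0 < q 0 ∧ 0 < internalEnergy q}

theorem continuousOn_internalEnergy : ContinuousOn internalEnergy {q | 0 < q 0} := by
  unfold internalEnergy
  fun_prop (disch := intro q hq; rw [mem_ofPred_eq] at hq; positivity)

theorem internalEnergy_combo_sub {x y : Fin 8 → ℝ} {a b : ℝ} (hx : 0 < x 0) (hy : 0 < y 0)
    (ha : 0 ≤ a) (hb : 0 ≤ b) (hab : a + b = 1) :
    internalEnergy (a • x + b • y) - (a * internalEnergy x + b * internalEnergy y) =
      a * b * (((x 1 * y 0 - y 1 * x 0) ^ 2 + (x 2 * y 0 - y 2 * x 0) ^ 2 +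
          (x 3 * y 0 - y 3 * x 0) ^ 2) / (2 * x 0 * y 0 * (a * x 0 + b * y 0)) +
        ((x 5 - y 5) ^ 2 + (x 6 - y 6) ^ 2 + (x 7 - y 7) ^ 2) / 2) := by
  have hρ : 0 < a * x 0 + b * y 0 := by simpa using convex_Ioi (0 : ℝ) hx hy ha hb hab
  obtain rfl : b = 1 - a := by linarith
  simp only [internalEnergy, Pi.add_apply, Pi.smul_apply, smul_eq_mul]
  field_simp
  ring

theorem concaveOn_internalEnergy : ConcaveOn ℝ {q | 0 < q 0} internalEnergy := by
  refine ⟨convex_halfSpace_gt (LinearMap.proj 0).isLinear 0,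
    fun x (hx : 0 < x 0) y (hy : 0 < y 0) a b ha hb hab => ?_⟩
  have hρ : 0 < a * x 0 + b * y 0 := by simpa using convex_Ioi (0 : ℝ) hx hy ha hb hab
  have hgap := internalEnergy_combo_sub hx hy ha hb hab
  have : 0 ≤ a * b * (((x 1 * y 0 - y 1 * x 0) ^ 2 + (x 2 * y 0 - y 2 * x 0) ^ 2 +
      (x 3 * y 0 - y 3 * x 0) ^ 2) / (2 * x 0 * y 0 * (a * x 0 + b * y 0)) +
      ((x 5 - y 5) ^ 2 + (x 6 - y 6) ^ 2 + (x 7 - y 7) ^ 2) / 2) := by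
    positivity
  simp only [smul_eq_mul]
  linarith

theorem eq_of_internalEnergy_combo_eq {x y : Fin 8 → ℝ} {a b : ℝ} (hx : 0 < x 0) (hρ : x 0 = y 0)
    (he : internalEnergy x = internalEnergy y) (ha : 0 < a) (hb : 0 < b) (hab : a + b = 1)
    (hcombo : internalEnergy (a • x + b • y) = a * internalEnergy x + b * internalEnergy y) :
    x = y := by
  have hgap := internalEnergy_combo_sub hx (hρ ▸ hx) ha.le hb.le hab
  rw [hcombo, sub_self, ← hρ, ← add_mul, hab, one_mul, eq_comm, mul_eq_zero,
    or_iff_right (mul_pos ha hb).ne', add_eq_zero_iff_of_nonneg (by positivity) (by positivity),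
    div_eq_zero_iff, div_eq_zero_iff] at hgap
  simp only [Fin.isValue, sq_nonneg, add_nonneg, add_eq_zero_iff_of_nonneg, ne_eq,
    OfNat.ofNat_ne_zero, not_false_eq_true, pow_eq_zero_iff, sub_eq_zero, mul_eq_mul_right_iff,
    hx.ne', or_false, mul_eq_zero, or_self] at hgap
  obtain ⟨⟨⟨h1, h2⟩, h3⟩, ⟨h5, h6⟩, h7⟩ := hgap
  have h4 : x 4 = y 4 := by
    simp only [internalEnergy, hρ, h1, h2, h3, h5, h6, h7] at he
    linarith
  ext i
  fin_cases i <;> assumption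

theorem isOpen_admissibleStates : IsOpen admissibleStates :=
  continuousOn_internalEnergy.isOpen_inter_preimage
    (isOpen_lt continuous_const (continuous_apply 0)) isOpen_Ioi

theorem convex_admissibleStates : Convex ℝ admissibleStates :=
  concaveOn_internalEnergy.convex_gt 0

theorem strictConvexOn_entropy {γ : ℝ} (hγ : 1 < γ) :
    StrictConvexOn ℝ admissibleStates
      (fun q => entropyDensity γ (q 0, (γ - 1) * internalEnergy q)) := by
  refine ⟨convex_admissibleStates, fun x hx y hy hxy a b ha hb hab => ?_⟩
  beta_reduce
  have hγ₁ : 0 < γ - 1 := sub_pos.2 hγ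
  set z := a • x + b • y
  set e := a * internalEnergy x + b * internalEnergy y
  have hz : z ∈ admissibleStates := convex_admissibleStates hx hy ha.le hb.le hab
  have he : 0 < (γ - 1) * e := by have := hx.2; have := hy.2; positivity
  have hconc : e ≤ internalEnergy z := concaveOn_internalEnergy.2 hx.1 hy.1 ha.le hb.le hab
  have hmem : ∀ q ∈ admissibleStates, (q 0, (γ - 1) * internalEnergy q) ∈ Ioi (0 : ℝ) ×ˢ Ioi 0 :=
    fun q hq => ⟨hq.1, mul_pos hγ₁ hq.2⟩
  have hcombo : a • (x 0, (γ - 1) * internalEnergy x) + b • (y 0, (γ - 1) * internalEnergy y) =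
      (z 0, (γ - 1) * e) := by
    simp only [z, e, Prod.smul_mk, Prod.mk_add_mk, smul_eq_mul, Pi.add_apply, Pi.smul_apply,
      Prod.mk.injEq, true_and]
    ring
  have hanti := strictAntiOn_entropyDensity hγ hz.1
  have hconvex := strictConvexOn_entropyDensity hγ
  rcases eq_or_ne (x 0, (γ - 1) * internalEnergy x) (y 0, (γ - 1) * internalEnergy y)
    with hxy' | hxy'
  · have hexy : internalEnergy x = internalEnergy y :=
      mul_left_cancel₀ hγ₁.ne' (congrArg Prod.snd hxy')
    have hlt : e < internalEnergy z := hconc.lt_of_ne fun h =>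
      hxy (eq_of_internalEnergy_combo_eq hx.1 (congrArg Prod.fst hxy') hexy ha hb hab h.symm)
    calc entropyDensity γ (z 0, (γ - 1) * internalEnergy z)
        < entropyDensity γ (z 0, (γ - 1) * e) := hanti he (hmem z hz).2 (by gcongr)
      _ ≤ _ := hcombo ▸ hconvex.convexOn.2 (hmem x hx) (hmem y hy) ha.le hb.le hab
  · calc entropyDensity γ (z 0, (γ - 1) * internalEnergy z)
        ≤ entropyDensity γ (z 0, (γ - 1) * e) := hanti.antitoneOn he (hmem z hz).2 (by gcongr)
      _ < _ := hcombo ▸ hconvex.2 (hmem x hx) (hmem y hy) hxy' ha hb hab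

end IdealMHD

/-- the set of physically admissible ideal-MHD states is open and convex,
and the mathematical entropy function is strictly convex on it. -/
theorem entropy_strictly_convex (γ : ℝ) (hγ : 1 < γ) :
    let Ω : Set (Fin 8 → ℝ) :=
      {q | 0 < q 0 ∧
        0 < q 4 - (q 1 ^ 2 + q 2 ^ 2 + q 3 ^ 2) / (2 * q 0)
              - (q 5 ^ 2 + q 6 ^ 2 + q 7 ^ 2) / 2}
    let S : (Fin 8 → ℝ) → ℝ := fun q =>
      -(q 0 * (Real.log ((γ - 1) * (q 4 - (q 1 ^ 2 + q 2 ^ 2 + q 3 ^ 2) / (2 * q 0)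
              - (q 5 ^ 2 + q 6 ^ 2 + q 7 ^ 2) / 2)) - γ * Real.log (q 0))) / (γ - 1)
    IsOpen Ω ∧ Convex ℝ Ω ∧ StrictConvexOn ℝ Ω S :=
  ⟨IdealMHD.isOpen_admissibleStates, IdealMHD.convex_admissibleStates,
    IdealMHD.strictConvexOn_entropy hγ⟩
end
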